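/- arXiv:2510.21662 — 2 statements merged into one kernel-verified Lean document; each statement's English description precedes it below -/
import Mathlib

section
/- The derivative of the regularized double-well potential satisfies the two-sided difference-quotient bounds: for all real x, y, −(x − y)² ≤ (f₀'(x) − f₀'(y))(x − y) ≤ (3K² − 1)(x − y)². Equivalently, for x ≠ y, −1 ≤ (f₀'(x) − f₀'(y))/(x − y) ≤ 3K² − 1. -/
/-- The derivative of the regularized Landau–Lifshitz double-well potential. -/
noncomputable def f0' (K c : ℝ) : ℝ :=
  if K < c then (3*K^2 - 1)*c - 2*K^3
  else if c < -K then (3*K^2 - 1)*c + 2*K^3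
  else c^3 - c

lemma f0'_g_mono (K : ℝ) (hK : 1 ≤ K) {a b : ℝ} (hab : a ≤ b) :
    f0' K a + a ≤ f0' K b + b := by
  have hK0 : (0:ℝ) < K := by linarith
  unfold f0'
  split_ifs with h1 h2 h3 h4 h5 <;>
    nlinarith [sq_nonneg (a+b), sq_nonneg (a-b), sq_nonneg (a+K), sq_nonneg (b-K),
      sq_nonneg (a-K), sq_nonneg (b+K), mul_nonneg (sub_nonneg.2 hab) (sq_nonneg (a+b)),
      mul_nonneg (sub_nonneg.2 hab) (sq_nonneg (a-b)), sq_nonneg K, mul_pos hK0 hK0]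

lemma f0'_h_mono (K : ℝ) (hK : 1 ≤ K) {a b : ℝ} (hab : a ≤ b) :
    (3*K^2 - 1)*a - f0' K a ≤ (3*K^2 - 1)*b - f0' K b := by
  have hK0 : (0:ℝ) < K := by linarith
  have hK3 : (0:ℝ) < K^3 := by positivity
  have hba := sub_nonneg.2 hab
  unfold f0'
  split_ifs <;>
    first
      | linarith [hK3]
      | nlinarith [mul_nonneg (sq_nonneg (b+K)) (by linarith : (0:ℝ) ≤ 2*K - b)]
      | nlinarith [mul_nonneg (sq_nonneg (a-K)) (by linarith : (0:ℝ) ≤ a + 2*K)]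
      | nlinarith [mul_nonneg hba (mul_nonneg (by linarith : (0:ℝ) ≤ K - a) (by linarith : (0:ℝ) ≤ K + a)),
          mul_nonneg hba (mul_nonneg (by linarith : (0:ℝ) ≤ K - b) (by linarith : (0:ℝ) ≤ K + b)),
          mul_nonneg hba (mul_nonneg (by linarith : (0:ℝ) ≤ 2*K - a - b) (by linarith : (0:ℝ) ≤ 2*K + a + b))]

/-- Two-sided difference-quotient bounds for the derivative of the regularized
double-well potential. -/
theorem f0'_difference_quotient_bounds (K : ℝ) (hK : 1 ≤ K) :
    (∀ x y : ℝ, -(x - y)^2 ≤ (f0' K x - f0' K y) * (x - y) ∧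
      (f0' K x - f0' K y) * (x - y) ≤ (3*K^2 - 1) * (x - y)^2) ∧
    (∀ x y : ℝ, x ≠ y → -1 ≤ (f0' K x - f0' K y) / (x - y) ∧
      (f0' K x - f0' K y) / (x - y) ≤ 3*K^2 - 1) := by
  have key : ∀ x y : ℝ, -(x - y)^2 ≤ (f0' K x - f0' K y) * (x - y) ∧
      (f0' K x - f0' K y) * (x - y) ≤ (3*K^2 - 1) * (x - y)^2 := by
    intro x y
    rcases le_total x y with h | h
    · have g := f0'_g_mono K hK h
      have hh := f0'_h_mono K hK h
      constructor <;> nlinarith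
    · have g := f0'_g_mono K hK h
      have hh := f0'_h_mono K hK h
      constructor <;> nlinarith
  refine ⟨key, fun x y hxy => ?_⟩
  have hne : x - y ≠ 0 := sub_ne_zero.2 hxy
  have hsq : (0:ℝ) < (x - y)^2 := by positivity
  have heq : (f0' K x - f0' K y) / (x - y) = ((f0' K x - f0' K y) * (x - y)) / (x - y)^2 := by
    field_simp
  obtain ⟨h1, h2⟩ := key x y
  constructor
  · rw [heq, le_div_iff₀ hsq]; nlinarith
  · rw [heq, div_le_iff₀ hsq]; nlinarith
end

section
/- Testing identity for the semi-implicit scheme: let H be a real inner product space, V a linear subspace of H, and a : V × V → ℝ a symmetric bilinear form. Let τ > 0 and M, ε, β_s ∈ ℝ, and let c⁰, c¹, μ ∈ V and g ∈ H satisfy (i) ⟨c¹ − c⁰, v⟩ = −Mτ·a(μ, v) for all v ∈ V, and (ii) ⟨μ, q⟩ = β_s⟨c¹ − c⁰, q⟩ + ⟨g, q⟩ + ε²·a(c¹, q) for all q ∈ V. Then β_s‖c¹ − c⁰‖² + ⟨g, c¹ − c⁰⟩ + (ε²/2)·( a(c¹, c¹) − a(c⁰, c⁰) + a(c¹ − c⁰,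 c¹ − c⁰) ) + Mτ·a(μ, μ) = 0. -/
open RealInnerProductSpace

/-- Testing identity for one step of the semi-implicit scheme, in an abstract real
inner product space `H` with a symmetric bilinear form `a` on a subspace `V`. -/
theorem semiImplicit_testing_identity
    {H : Type*} [NormedAddCommGroup H] [InnerProductSpace ℝ H]
    (V : Submodule ℝ H) (a : V →ₗ[ℝ] V →ₗ[ℝ] ℝ)
    (ha_symm : ∀ u w : V, a u w = a w u)
    (τ M ε βs : ℝ) (hτ : 0 < τ)
    (c0 c1 μ : V) (g : H)
    (h1 : ∀ v : V, ⟪((c1 : H) - (c0 : H)), (v : H)⟫ = -(M * τ) * a μ v)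
    (h2 : ∀ q : V, ⟪(μ : H), (q : H)⟫ =
      βs * ⟪((c1 : H) - (c0 : H)), (q : H)⟫ + ⟪g, (q : H)⟫ + ε^2 * a c1 q) :
    βs * ‖(c1 : H) - (c0 : H)‖^2 + ⟪g, ((c1 : H) - (c0 : H))⟫
      + ε^2/2 * (a c1 c1 - a c0 c0 + a (c1 - c0) (c1 - c0))
      + M * τ * a μ μ = 0 := by
  have hμ := h1 μ
  have hq := h2 (c1 - c0)
  have hcoe : ((c1 - c0 : V) : H) = (c1 : H) - (c0 : H) := rfl
  rw [hcoe, real_inner_comm ((c1 : H) - (c0 : H)) (μ : H), hμ,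
    real_inner_self_eq_norm_sq ((c1 : H) - (c0 : H))] at hq
  have hexp : a c1 (c1 - c0) = (a c1 c1 - a c0 c0 + a (c1 - c0) (c1 - c0)) / 2 := by
    simp only [map_sub, LinearMap.sub_apply, ha_symm c0 c1]
    ring
  rw [hexp] at hq
  linarith
end
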